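/- Let W = W₁ × W₂ be a finite Coxeter group with S = S₁ ⊔ S₂. For every pair of transversal edges I ⇆ J in Q_{W₁} and every K ⊆ S₂ one has ι₁(X_{IJ}) ι₂(E_K) = X_{I⊔K, J⊔K} = ι₂(E_K) ι₁(X_{IJ}) in Ω(W,S). -/

import Mathlib

open scoped TensorProduct

noncomputable section

namespace WGraphPaper

variable (k : Type*) [CommRing k] {B B₁ B₂ : Type*}

/-! ### Gyoja's W-graph algebra with coefficients in `k`
(`Omega ℤ M` is the W-graph algebra `Ω(W,S)` itself, `Omega k M` is `kΩ`). -/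

/-- The free ring `k⟨e_b, x_b | b ∈ B⟩`; `Sum.inl b` encodes the generator `e_b` and
`Sum.inr b` encodes the generator `x_b`. -/
abbrev FreeGen (B : Type*) := FreeAlgebra k (B ⊕ B)

def eGen (b : B) : FreeGen k B := FreeAlgebra.ι k (Sum.inl b)
def xGen (b : B) : FreeGen k B := FreeAlgebra.ι k (Sum.inr b)

/-- `altProd a b n` is the alternating product `a * b * a * ⋯` with `n` factors. -/
def altProd {A : Type*} [Monoid A] : A → A → ℕ → A
  | _, _, 0 => 1
  | a, b, n + 1 => a * altProd b a n

/-- The braid commutator `Δ_m(a,b) = (a b a ⋯) - (b a b ⋯)` (`m` factors each). -/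
def braidComm {A : Type*} [Ring A] (m : ℕ) (a b : A) : A := altProd a b m - altProd b a m

/-- `ι(T_b) = -v⁻¹ e_b + v (1 - e_b) + x_b`, an element of `(FreeGen k B)[v,v⁻¹]`. -/
def iotaT (b : B) : LaurentPolynomial (FreeGen k B) :=
  LaurentPolynomial.C (-(eGen k b)) * LaurentPolynomial.T (-1)
    + LaurentPolynomial.C (1 - eGen k b) * LaurentPolynomial.T 1
    + LaurentPolynomial.C (xGen k b)

/-- The coefficient of `v^n` in a Laurent polynomial. -/
def lcoeff {R : Type*} [Semiring R] (p : LaurentPolynomial R) (n : ℤ) : R :=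
  (show ℤ →₀ R from p.coeff) n

/-- The defining relations of Gyoja's W-graph algebra: the relations (a) and (b) together
with the vanishing of all Laurent coefficients `y^γ(s,t)` of the braid commutators
`Δ_{m_{st}}(ι(T_s), ι(T_t))` (for `m_{st} < ∞`, i.e. `M s t ≠ 0`). -/
inductive OmegaRel (M : CoxeterMatrix B) : FreeGen k B → FreeGen k B → Prop
  | e_idem (b : B) : OmegaRel M (eGen k b * eGen k b) (eGen k b)
  | e_comm (b b' : B) : OmegaRel M (eGen k b * eGen k b') (eGen k b' * eGen k b)
  | ex (b : B) : OmegaRel M (eGen k b * xGen k b) (xGen k b)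
  | xe (b : B) : OmegaRel M (xGen k b * eGen k b) 0
  | braid (b b' : B) (h : M b b' ≠ 0) (γ : ℤ) :
      OmegaRel M (lcoeff (braidComm (M b b') (iotaT k b) (iotaT k b')) γ) 0

/-- Gyoja's W-graph algebra `Ω(W,S)` (for `k = ℤ`), resp. `kΩ(W,S)`, defined from
the Coxeter matrix of `(W,S)`. -/
abbrev Omega (M : CoxeterMatrix B) := RingQuot (OmegaRel k M)

/-- The image of the generator `e_b` in `Ω`. -/
def eOm (M : CoxeterMatrix B) (b : B) : Omega k M :=
  RingQuot.mkRingHom (OmegaRel k M) (eGen k b)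

/-- The image of the generator `x_b` in `Ω`. -/
def xOm (M : CoxeterMatrix B) (b : B) : Omega k M :=
  RingQuot.mkRingHom (OmegaRel k M) (xGen k b)

lemma commute_eOm (M : CoxeterMatrix B) (b b' : B) : Commute (eOm k M b) (eOm k M b') := by
  show _ = _
  rw [eOm, eOm, ← map_mul, ← map_mul]
  exact RingQuot.mkRingHom_rel (OmegaRel.e_comm b b')

lemma commute_oneSubEOm (M : CoxeterMatrix B) (b b' : B) :
    Commute (1 - eOm k M b) (1 - eOm k M b') :=
  (Commute.one_left _).sub_left ((Commute.one_right _).sub_right (commute_eOm k M b b'))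

variable [Fintype B] [DecidableEq B] [DecidableEq B₁] [DecidableEq B₂]

/-- The idempotent `E_I = (∏_{t ∈ I} e_t) (∏_{t ∈ S∖I} (1 - e_t))`. -/
def EOm (M : CoxeterMatrix B) (I : Finset B) : Omega k M :=
  (I.noncommProd (fun b => eOm k M b) (fun _ _ _ _ _ => commute_eOm k M _ _)) *
    ((Iᶜ).noncommProd (fun b => 1 - eOm k M b) (fun _ _ _ _ _ => commute_oneSubEOm k M _ _))

/-- The edge element `X_{IJ}^s = E_I x_s E_J`. -/
def XOm (M : CoxeterMatrix B) (I J : Finset B) (s : B) : Omega k M :=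
  EOm k M I * xOm k M s * EOm k M J

/-- `I ← J` is an edge of the compatibility graph `Q_W`: `I ∖ J ≠ ∅` and no element of
`I ∖ J` commutes (in `W`, i.e. `m_{st} = 2`) with an element of `J ∖ I`. -/
def QEdge (M : CoxeterMatrix B) (I J : Finset B) : Prop :=
  (I \ J).Nonempty ∧ ∀ s ∈ I \ J, ∀ t ∈ J \ I, M s t ≠ 2

/-- `I ⇆ J`: `I` and `J` are joined by a pair of transversal edges of `Q_W`. -/
def Transversal (M : CoxeterMatrix B) (I J : Finset B) : Prop :=
  QEdge M I J ∧ (J \ I).Nonempty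

/-- The generators of the subalgebra `Ψ(W,S)`: all `E_I` and all transversal edge
elements `X_{IJ}`. -/
def psiGens (M : CoxeterMatrix B) : Set (Omega k M) :=
  {a | ∃ I : Finset B, a = EOm k M I} ∪
    {a | ∃ I J : Finset B, ∃ s : B, Transversal M I J ∧ s ∈ I \ J ∧ a = XOm k M I J s}

/-- The subring `Ψ(W,S) ⊆ Ω(W,S)` generated by all `E_I` and all transversal edges. -/
def Psi (M : CoxeterMatrix B) : Subring (Omega k M) := Subring.closure (psiGens k M)

/-- The subalgebra `kΨ(W,S) ⊆ kΩ(W,S)` generated by all `E_I` and all transversal edges. -/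
def PsiAlg (M : CoxeterMatrix B) : Subalgebra k (Omega k M) :=
  Algebra.adjoin k (psiGens k M)

/-! ### Products of Coxeter systems -/

/-- The Coxeter matrix of the product `W₁ × W₂`, on `S = S₁ ⊔ S₂` (each element of `S₁`
commutes with each element of `S₂`). -/
def prodMatrix (M₁ : CoxeterMatrix B₁) (M₂ : CoxeterMatrix B₂) : CoxeterMatrix (B₁ ⊕ B₂) where
  M i j :=
    match i, j with
    | Sum.inl a, Sum.inl b => M₁ a b
    | Sum.inr a, Sum.inr b => M₂ a b
    | _, _ => 2
  isSymm := by
    unfold Matrix.IsSymm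
    ext i j
    rcases i with a | a <;> rcases j with b | b <;>
      simp only [Matrix.transpose_apply] <;>
      first
        | exact M₁.symmetric b a
        | exact M₂.symmetric b a
        | rfl
  diagonal i := by rcases i with a | a <;> simp [CoxeterMatrix.diagonal]
  off_diagonal i j h := by
    rcases i with a | a <;> rcases j with b | b
    · exact M₁.off_diagonal a b (by rintro rfl; exact h rfl)
    · simp
    · simp
    · exact M₂.off_diagonal a b (by rintro rfl; exact h rfl)

def inlEmb : B₁ ↪ B₁ ⊕ B₂ := ⟨Sum.inl, Sum.inl_injective⟩
def inrEmb : B₂ ↪ B₁ ⊕ B₂ := ⟨Sum.inr, Sum.inr_injective⟩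

/-- The subset `I ⊔ K` of `S = S₁ ⊔ S₂`, for `I ⊆ S₁` and `K ⊆ S₂`. -/
def fjoin (I : Finset B₁) (K : Finset B₂) : Finset (B₁ ⊕ B₂) :=
  I.map inlEmb ∪ K.map inrEmb

/-- The part `I₁ = I ∩ S₁` of a subset `I ⊆ S = S₁ ⊔ S₂`. -/
def part1 (I : Finset (B₁ ⊕ B₂)) : Finset B₁ :=
  I.preimage Sum.inl Sum.inl_injective.injOn

/-- The part `I₂ = I ∩ S₂` of a subset `I ⊆ S = S₁ ⊔ S₂`. -/
def part2 (I : Finset (B₁ ⊕ B₂)) : Finset B₂ :=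
  I.preimage Sum.inr Sum.inr_injective.injOn

variable (M₁ : CoxeterMatrix B₁) (M₂ : CoxeterMatrix B₂)

/-- `f` is the parabolic morphism `ι₁ : Ω₁ → Ω` (it sends `e_s ↦ e_s`, `x_s ↦ x_s`
for `s ∈ S₁`). -/
def Parab1Cond (f : Omega k M₁ → Omega k (prodMatrix M₁ M₂)) : Prop :=
  ∀ b : B₁, f (eOm k M₁ b) = eOm k (prodMatrix M₁ M₂) (Sum.inl b) ∧
    f (xOm k M₁ b) = xOm k (prodMatrix M₁ M₂) (Sum.inl b)

/-- `f` is the parabolic morphism `ι₂ : Ω₂ → Ω` (it sends `e_s ↦ e_s`, `x_s ↦ x_s`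
for `s ∈ S₂`). -/
def Parab2Cond (f : Omega k M₂ → Omega k (prodMatrix M₁ M₂)) : Prop :=
  ∀ b : B₂, f (eOm k M₂ b) = eOm k (prodMatrix M₁ M₂) (Sum.inr b) ∧
    f (xOm k M₂ b) = xOm k (prodMatrix M₁ M₂) (Sum.inr b)

/-- `t` is the morphism `τ : Ω → Ω₁ ⊗ Ω₂` of the paper: it sends `e_s ↦ e_s ⊗ 1`,
`x_s ↦ x_s ⊗ 1` for `s ∈ S₁` and `e_s ↦ 1 ⊗ e_s`, `x_s ↦ 1 ⊗ x_s` for `s ∈ S₂`. -/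
def TauCond (t : Omega k (prodMatrix M₁ M₂) → Omega k M₁ ⊗[k] Omega k M₂) : Prop :=
  (∀ b : B₁, t (eOm k (prodMatrix M₁ M₂) (Sum.inl b)) = eOm k M₁ b ⊗ₜ[k] 1 ∧
      t (xOm k (prodMatrix M₁ M₂) (Sum.inl b)) = xOm k M₁ b ⊗ₜ[k] 1) ∧
  (∀ b : B₂, t (eOm k (prodMatrix M₁ M₂) (Sum.inr b)) = 1 ⊗ₜ[k] eOm k M₂ b ∧
      t (xOm k (prodMatrix M₁ M₂) (Sum.inr b)) = 1 ⊗ₜ[k] xOm k M₂ b)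



/-- The coefficientwise extension of a ring homomorphism to Laurent polynomial rings. -/
def laurentMap {R A : Type*} [Semiring R] [Semiring A] (f : R →+* A) :
    LaurentPolynomial R →+* LaurentPolynomial A :=
  AddMonoidAlgebra.liftNCRingHom (LaurentPolynomial.C.comp f)
    { toFun := fun n => LaurentPolynomial.T (Multiplicative.toAdd n)
      map_one' := LaurentPolynomial.T_zero
      map_mul' := fun _ _ => LaurentPolynomial.T_add _ _ }
    (fun _ n => (LaurentPolynomial.commute_T (Multiplicative.toAdd n) _).symm)

/-- `k` is a good ring for `(W,S)`: it contains `2cos(2π/m_{st})` for all `s,t ∈ S`. -/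
def GoodRing (M : CoxeterMatrix B) (k : Subring ℂ) : Prop :=
  ∀ i j : B, M i j ≠ 0 → (2 * Complex.cos (2 * Real.pi / (M i j : ℂ))) ∈ k

/-- The irreducible complex characters of a finite group `G`. -/
def IrrChar (G : Type) [Group G] : Type :=
  {χ : G → ℂ // ∃ V : FDRep ℂ G, CategoryTheory.Simple V ∧ χ = FDRep.character V}

/-- The degree `d_λ` of an irreducible character `λ` (its value at `1`). -/
def IrrChar.degree {G : Type} [Group G] (χ : IrrChar G) : ℕ := ⌊(χ.val 1).re⌋₊

variable {ι : Type*}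

/-- (Z1): the `F^λ` are a decomposition of the identity into orthogonal idempotents. -/
def Z1 {A : Type*} [Ring A] (F : ι → A) : Prop :=
  (∀ l, F l * F l = F l) ∧ (∀ l m, l ≠ m → F l * F m = 0) ∧ ∑ᶠ l, F l = 1

variable [Fintype B] [DecidableEq B]

/-- (Z2): the decomposition is compatible with the one coming from the path-algebra
structure: `E_I F^λ = F^λ E_I`. -/
def Z2 (M : CoxeterMatrix B) (F : ι → Omega k M) : Prop :=
  ∀ l (I : Finset B), EOm k M I * F l = F l * EOm k M I

/-- (Z3), with a specified partial order `le`: only "downward edges" exist,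
i.e. `F^λ Ω F^μ ≠ 0 → λ ⪯ μ`. -/
def Z3At {A : Type*} [Ring A] (F : ι → A) (le : ι → ι → Prop) : Prop :=
  ∀ l m, (∃ a : A, F l * a * F m ≠ 0) → le l m

/-- (Z3): there is a partial order on `Irr(W)` such that only "downward edges" exist. -/
def Z3 {A : Type*} [Ring A] (F : ι → A) : Prop :=
  ∃ le : ι → ι → Prop, IsPartialOrder ι le ∧ Z3At F le

/-- (Z4): there are surjective `k`-algebra morphisms `k^{d_λ×d_λ} ↠ F^λ kΩ F^λ`. -/
def Z4 (M : CoxeterMatrix B) (F : ι → Omega k M) (d : ι → ℕ) : Prop :=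
  ∀ l, ∃ ψ : Matrix (Fin (d l)) (Fin (d l)) k →ₗ[k] Omega k M,
    (∀ x y, ψ (x * y) = ψ x * ψ y) ∧ ψ 1 = F l ∧
      Set.range ψ = {z | ∃ a : Omega k M, z = F l * a * F l}

/-- (Z5): `F^λ X_{IJ} F^λ ∈ kΨ(W,S)` for all edges `I ← J` of `Q_W`. -/
def Z5 (M : CoxeterMatrix B) (F : ι → Omega k M) : Prop :=
  ∀ l (I J : Finset B) (s : B), QEdge M I J → s ∈ I \ J →
    F l * XOm k M I J s * F l ∈ PsiAlg k M

/-- (Z6): `F^λ ∈ kΨ(W,S)`. -/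
def Z6 (M : CoxeterMatrix B) (F : ι → Omega k M) : Prop :=
  ∀ l, F l ∈ PsiAlg k M

/-- The family satisfies all of (Z1)–(Z6), i.e. the strong W-graph decomposition
conjecture holds via this family (`d` is the degree function on `Irr(W)`). -/
def StrongZ (M : CoxeterMatrix B) (F : ι → Omega k M) (d : ι → ℕ) : Prop :=
  Z1 F ∧ Z2 k M F ∧ Z3 F ∧ Z4 k M F d ∧ Z5 k M F ∧ Z6 k M F

/-- The maximal length (number of steps) of a strict chain for the relation `le`. -/
def orderHeight (le : ι → ι → Prop) : ℕ :=
  sSup {n | ∃ c : Fin (n + 1) → ι, Function.Injective c ∧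
    ∀ i j : Fin (n + 1), i < j → le (c i) (c j)}

/-! The braid relation for a pair `s ∈ S₁`, `t ∈ S₂` (where `m_{st} = 2`) yields, in its
`v⁻¹`-coefficient, `e_s x_t + x_s e_t = e_t x_s + x_t e_s`. Sandwiched between `E_I` and
`E_J` with `s ∈ I ∖ J`, the terms `E_I e_s x_t E_J = E_I x_t E_J` and `E_I x_t e_s E_J` vanish,
the first because some `t' ∈ J ∖ I` forces `E_I x_t E_J = E_I (1 - e_{t'}) x_t e_{t'} E_J = 0`.
Hence every `e_t`, `t ∈ S₂`, commutes with `E_I x_s E_J`, so does `E_K`, and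
`E_{I⊔K} = E_I E_K` gives both equalities. -/

theorem _root_.Finset.noncommProd_map {α β M : Type*} [Monoid M] (s : Finset α) (g : α ↪ β)
    (f : β → M) (comm) :
    (s.map g).noncommProd f comm =
      s.noncommProd (f ∘ g) fun _ ha _ hb hab =>
        comm (Finset.mem_map_of_mem g ha) (Finset.mem_map_of_mem g hb) (g.injective.ne hab) := by
  simp only [Finset.noncommProd, Finset.map_val, Multiset.map_map]

theorem _root_.Finset.noncommProd_mul_eq_self {α M : Type*} [Monoid M] (s : Finset α)
    (f : α → M) (comm) {x : M} (h : ∀ a ∈ s, f a * x = x) : s.noncommProd f comm * x = x :=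
  Finset.noncommProd_induction _ _ _ (· * x = x) (fun a b ha hb => by rw [mul_assoc, hb, ha])
    (one_mul x) h

section Fjoin

variable {ι₁ ι₂ : Type*} [DecidableEq ι₁] [DecidableEq ι₂]

lemma compl_fjoin [Fintype ι₁] [Fintype ι₂] (I : Finset ι₁) (K : Finset ι₂) :
    (fjoin I K)ᶜ = fjoin Iᶜ Kᶜ := by
  ext x
  cases x <;> simp [fjoin, inlEmb, inrEmb]

lemma noncommProd_fjoin {M : Type*} [Monoid M] (I : Finset ι₁) (K : Finset ι₂)
    (f : ι₁ ⊕ ι₂ → M) (hf : ∀ a b, Commute (f a) (f b)) :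
    (fjoin I K).noncommProd f (fun _ _ _ _ _ => hf _ _) =
      I.noncommProd (f ∘ Sum.inl) (fun _ _ _ _ _ => hf _ _) *
        K.noncommProd (f ∘ Sum.inr) (fun _ _ _ _ _ => hf _ _) := by
  have hdisj : Disjoint (I.map inlEmb) (K.map inrEmb) := by
    simp [Finset.disjoint_left, inlEmb, inrEmb]
  exact (Finset.noncommProd_union_of_disjoint hdisj f _).trans
    (congrArg₂ (· * ·) (Finset.noncommProd_map _ _ _ _) (Finset.noncommProd_map _ _ _ _))

end Fjoin

section IdemProd

variable {A ι : Type*} [Ring A] [Fintype ι] [DecidableEq ι] {e : ι → A}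

/-- `EOm k M I` is the case `e = eOm k M`. -/
def idemProd (hc : ∀ a b, Commute (e a) (e b)) (I : Finset ι) : A :=
  I.noncommProd e (Pairwise.set_pairwise (fun a b _ => hc a b) _) *
    Iᶜ.noncommProd (fun b => 1 - e b) (Pairwise.set_pairwise (fun a b _ =>
      (Commute.one_left _).sub_left ((Commute.one_right _).sub_right (hc a b))) _)

lemma idemProd_fjoin {ι₁ ι₂ : Type*} [Fintype ι₁] [DecidableEq ι₁] [Fintype ι₂]
    [DecidableEq ι₂] {e : ι₁ ⊕ ι₂ → A} (hc : ∀ a b, Commute (e a) (e b))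
    (I : Finset ι₁) (K : Finset ι₂) :
    idemProd hc (fjoin I K) =
      idemProd (fun a b => hc (.inl a) (.inl b)) I *
        idemProd (fun a b => hc (.inr a) (.inr b)) K := by
  have hc' : ∀ a b, Commute (1 - e a) (1 - e b) := fun a b =>
    (Commute.one_left _).sub_left ((Commute.one_right _).sub_right (hc a b))
  rw [idemProd, idemProd, idemProd,
    Finset.noncommProd_congr (compl_fjoin I K) (fun _ _ => rfl),
    noncommProd_fjoin I K e hc,
    noncommProd_fjoin Iᶜ Kᶜ (fun b => 1 - e b) hc']
  exact (Finset.noncommProd_commute _ _ _ _ fun a _ => (Commute.one_right _).sub_right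
    (Finset.noncommProd_commute _ _ _ _ fun b _ => hc (.inl a) (.inr b)).symm).mul_mul_mul_comm _ _

variable (hc : ∀ a b, Commute (e a) (e b))

lemma commute_idemProd {y : A} (hy : ∀ b, Commute y (e b)) (I : Finset ι) :
    Commute y (idemProd hc I) :=
  (Finset.noncommProd_commute _ _ _ _ fun b _ => hy b).mul_right
    (Finset.noncommProd_commute _ _ _ _ fun b _ => (Commute.one_right y).sub_right (hy b))

lemma map_idemProd {A' : Type*} [Ring A'] {e' : ι → A'} (hc' : ∀ a b, Commute (e' a) (e' b))
    (f : A →+* A') (hf : ∀ b, f (e b) = e' b) (I : Finset ι) :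
    f (idemProd hc I) = idemProd hc' I := by
  simp only [idemProd, map_mul, Finset.map_noncommProd, map_sub, map_one, hf]

variable {hc} {I : Finset ι} {b : ι}

lemma mul_idemProd_of_mem (hi : ∀ b, IsIdempotentElem (e b)) (hb : b ∈ I) :
    e b * idemProd hc I = idemProd hc I := by
  rw [idemProd, ← mul_assoc, ← Finset.mul_noncommProd_erase I hb, ← mul_assoc, (hi b).eq]

lemma mul_idemProd_of_notMem (hi : ∀ b, IsIdempotentElem (e b)) (hb : b ∉ I) :
    e b * idemProd hc I = 0 := by
  rw [idemProd, (Finset.noncommProd_commute _ _ _ _ fun a _ => hc b a).left_comm,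
    ← Finset.mul_noncommProd_erase Iᶜ (Finset.mem_compl.2 hb), ← mul_assoc (e b), mul_sub,
    mul_one, (hi b).eq, sub_self, zero_mul, mul_zero]

lemma idemProd_mul_of_mem (hi : ∀ b, IsIdempotentElem (e b)) (hb : b ∈ I) :
    idemProd hc I * e b = idemProd hc I := by
  rw [← (commute_idemProd hc (hc b) I).eq, mul_idemProd_of_mem hi hb]

lemma idemProd_mul_of_notMem (hi : ∀ b, IsIdempotentElem (e b)) (hb : b ∉ I) :
    idemProd hc I * e b = 0 := by
  rw [← (commute_idemProd hc (hc b) I).eq, mul_idemProd_of_notMem hi hb]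

lemma isIdempotentElem_idemProd (hi : ∀ b, IsIdempotentElem (e b)) (I : Finset ι) :
    IsIdempotentElem (idemProd hc I) := by
  unfold IsIdempotentElem
  nth_rw 1 [idemProd]
  rw [mul_assoc, Finset.noncommProd_mul_eq_self Iᶜ _ _ fun b hb => by
      rw [sub_mul, one_mul, mul_idemProd_of_notMem hi (Finset.mem_compl.1 hb), sub_zero],
    Finset.noncommProd_mul_eq_self I _ _ fun b hb => mul_idemProd_of_mem hi hb]

end IdemProd

section Relations

variable (k : Type*) [CommRing k] {B : Type*}

lemma lcoeff_braidComm_two_neg_one (b b' : B) :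
    lcoeff (braidComm 2 (iotaT k b) (iotaT k b')) (-1) =
      (eGen k b' * xGen k b + xGen k b' * eGen k b) -
        (eGen k b * xGen k b' + xGen k b * eGen k b') := by
  have hsingle : ∀ c : B, iotaT k c = .single (-1) (-eGen k c) + .single 1 (1 - eGen k c)
      + .single 0 (xGen k c) := fun c => by
    rw [iotaT, ← LaurentPolynomial.single_eq_C_mul_T, ← LaurentPolynomial.single_eq_C_mul_T]
    rfl
  simp only [braidComm, altProd, mul_one, hsingle, lcoeff, add_mul, mul_add,
    AddMonoidAlgebra.single_mul_single, AddMonoidAlgebra.coeff_add, AddMonoidAlgebra.coeff_sub,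
    AddMonoidAlgebra.coeff_single]
  norm_num
  noncomm_ring

variable (M : CoxeterMatrix B)

lemma isIdempotentElem_eOm (b : B) : IsIdempotentElem (eOm k M b) := by
  rw [IsIdempotentElem, eOm, ← map_mul]
  exact RingQuot.mkRingHom_rel (OmegaRel.e_idem b)

lemma xOm_mul_eOm (b : B) : xOm k M b * eOm k M b = 0 := by
  rw [eOm, xOm, ← map_mul, ← map_zero (RingQuot.mkRingHom (OmegaRel k M))]
  exact RingQuot.mkRingHom_rel (OmegaRel.xe b)

variable {M}

/-- The `v⁻¹`-coefficient of the braid relation `ι(T_b) ι(T_{b'}) = ι(T_{b'}) ι(T_b)`. -/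
lemma eOm_mul_xOm_add_xOm_mul_eOm {b b' : B} (h : M b b' = 2) :
    eOm k M b * xOm k M b' + xOm k M b * eOm k M b' =
      eOm k M b' * xOm k M b + xOm k M b' * eOm k M b := by
  have hrel :=
    RingQuot.mkRingHom_rel (OmegaRel.braid (k := k) (M := M) b b' (by simp [h]) (-1))
  rw [h, lcoeff_braidComm_two_neg_one, map_zero, map_sub, sub_eq_zero] at hrel
  simpa only [eOm, xOm, map_add, map_mul] using hrel.symm

lemma one_sub_eOm_mul_xOm_mul_eOm {b b' : B} (h : M b b' = 2) :
    (1 - eOm k M b) * xOm k M b' * eOm k M b = 0 := by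
  have h₁ : xOm k M b * eOm k M b' * eOm k M b = 0 := by
    rw [mul_assoc, ← (commute_eOm k M b b').eq, ← mul_assoc, xOm_mul_eOm, zero_mul]
  have h₂ : eOm k M b' * xOm k M b * eOm k M b = 0 := by
    rw [mul_assoc, xOm_mul_eOm, mul_zero]
  have h₃ : xOm k M b' * eOm k M b * eOm k M b = xOm k M b' * eOm k M b := by
    rw [mul_assoc, (isIdempotentElem_eOm k M b).eq]
  have hrel := congrArg (· * eOm k M b) (eOm_mul_xOm_add_xOm_mul_eOm k h)
  simp only [add_mul, h₁, h₂, h₃, add_zero, zero_add] at hrel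
  rw [sub_mul, sub_mul, one_mul, hrel, sub_self]

lemma commute_eOm_mul_xOm_mul {s t t' : B} (hst : M s t = 2) (ht't : M t' t = 2)
    {F G : Omega k M} (hFs : F * eOm k M s = F) (hFt' : F * eOm k M t' = 0)
    (hsG : eOm k M s * G = 0) (ht'G : eOm k M t' * G = G) (hF : Commute (eOm k M t) F)
    (hG : Commute (eOm k M t) G) :
    Commute (eOm k M t) (F * xOm k M s * G) := by
  have hxt : F * xOm k M t * G = 0 :=
    calc F * xOm k M t * G = F * (1 - eOm k M t') * xOm k M t * (eOm k M t' * G) := by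
          rw [mul_sub, mul_one, hFt', sub_zero, ht'G]
      _ = F * ((1 - eOm k M t') * xOm k M t * eOm k M t') * G := by simp only [mul_assoc]
      _ = 0 := by rw [one_sub_eOm_mul_xOm_mul_eOm k ht't, mul_zero, zero_mul]
  have hst' : eOm k M t * xOm k M s =
      eOm k M s * xOm k M t + xOm k M s * eOm k M t - xOm k M t * eOm k M s :=
    eq_sub_of_add_eq (eOm_mul_xOm_add_xOm_mul_eOm k hst).symm
  have h₁ : F * (eOm k M s * xOm k M t) * G = 0 := by rw [← mul_assoc, hFs, hxt]
  have h₂ : F * (xOm k M t * eOm k M s) * G = 0 := by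
    rw [mul_assoc, mul_assoc, hsG, mul_zero, mul_zero]
  calc eOm k M t * (F * xOm k M s * G) = F * (eOm k M t * xOm k M s) * G := by
        simp only [← mul_assoc, hF.eq]
    _ = F * (xOm k M s * eOm k M t) * G := by
        rw [hst', mul_sub, mul_add, sub_mul, add_mul, h₁, h₂, zero_add, sub_zero]
    _ = F * xOm k M s * G * eOm k M t := by simp only [mul_assoc, hG.eq]

end Relations

section Product

variable (k : Type*) [CommRing k] {B₁ B₂ : Type*} (M₁ : CoxeterMatrix B₁)
  (M₂ : CoxeterMatrix B₂)

/-- `ι₁(E_I)`. -/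
def EInl [Fintype B₁] [DecidableEq B₁] (I : Finset B₁) : Omega k (prodMatrix M₁ M₂) :=
  idemProd (fun a b => commute_eOm k (prodMatrix M₁ M₂) (.inl a) (.inl b)) I

/-- `ι₂(E_K)`. -/
def EInr [Fintype B₂] [DecidableEq B₂] (K : Finset B₂) : Omega k (prodMatrix M₁ M₂) :=
  idemProd (fun a b => commute_eOm k (prodMatrix M₁ M₂) (.inr a) (.inr b)) K

variable {k M₁ M₂}

lemma map_EOm_of_parab1 [Fintype B₁] [DecidableEq B₁]
    {f₁ : Omega k M₁ →+* Omega k (prodMatrix M₁ M₂)} (h₁ : Parab1Cond k M₁ M₂ f₁)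
    (I : Finset B₁) : f₁ (EOm k M₁ I) = EInl k M₁ M₂ I :=
  map_idemProd (commute_eOm k M₁) _ f₁ (fun b => (h₁ b).1) I

lemma map_EOm_of_parab2 [Fintype B₂] [DecidableEq B₂]
    {f₂ : Omega k M₂ →+* Omega k (prodMatrix M₁ M₂)} (h₂ : Parab2Cond k M₁ M₂ f₂)
    (K : Finset B₂) : f₂ (EOm k M₂ K) = EInr k M₁ M₂ K :=
  map_idemProd (commute_eOm k M₂) _ f₂ (fun b => (h₂ b).1) K

variable [Fintype B₁] [DecidableEq B₁] [Fintype B₂] [DecidableEq B₂]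

lemma EOm_fjoin (I : Finset B₁) (K : Finset B₂) :
    EOm k (prodMatrix M₁ M₂) (fjoin I K) = EInl k M₁ M₂ I * EInr k M₁ M₂ K :=
  idemProd_fjoin (commute_eOm k _) I K

lemma commute_EInr_EInl_mul_xOm_mul {I J : Finset B₁} {s t' : B₁} (hs : s ∈ I \ J)
    (ht' : t' ∈ J \ I) (K : Finset B₂) :
    Commute (EInr k M₁ M₂ K)
      (EInl k M₁ M₂ I * xOm k (prodMatrix M₁ M₂) (.inl s) * EInl k M₁ M₂ J) := by
  have hi : ∀ b, IsIdempotentElem (eOm k (prodMatrix M₁ M₂) (.inl b)) := fun b =>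
    isIdempotentElem_eOm k _ _
  rw [Finset.mem_sdiff] at hs ht'
  have hIs : EInl k M₁ M₂ I * eOm k _ (.inl s) = EInl k M₁ M₂ I :=
    idemProd_mul_of_mem hi hs.1
  have hIt' : EInl k M₁ M₂ I * eOm k _ (.inl t') = 0 := idemProd_mul_of_notMem hi ht'.2
  have hsJ : eOm k _ (.inl s) * EInl k M₁ M₂ J = 0 := mul_idemProd_of_notMem hi hs.2
  have ht'J : eOm k _ (.inl t') * EInl k M₁ M₂ J = EInl k M₁ M₂ J :=
    mul_idemProd_of_mem hi ht'.1
  refine (commute_idemProd _ (fun t => ?_) K).symm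
  have hcomm : ∀ L, Commute (eOm k (prodMatrix M₁ M₂) (.inr t)) (EInl k M₁ M₂ L) :=
    fun L => commute_idemProd _ (fun a => commute_eOm k _ _ _) L
  exact (commute_eOm_mul_xOm_mul k rfl rfl hIs hIt' hsJ ht'J (hcomm I) (hcomm J)).symm

lemma XOm_fjoin {I J : Finset B₁} {s t' : B₁} (hs : s ∈ I \ J) (ht' : t' ∈ J \ I)
    (K : Finset B₂) :
    XOm k (prodMatrix M₁ M₂) (fjoin I K) (fjoin J K) (.inl s) =
      EInl k M₁ M₂ I * xOm k (prodMatrix M₁ M₂) (.inl s) * EInl k M₁ M₂ J *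
        EInr k M₁ M₂ K := by
  have hIK : Commute (EInl k M₁ M₂ I) (EInr k M₁ M₂ K) :=
    commute_idemProd _ (fun b => (commute_idemProd _ (fun a => commute_eOm k _ _ _) I).symm) K
  rw [XOm, EOm_fjoin, EOm_fjoin]
  calc EInl k M₁ M₂ I * EInr k M₁ M₂ K * xOm k (prodMatrix M₁ M₂) (.inl s) *
        (EInl k M₁ M₂ J * EInr k M₁ M₂ K)
      = EInr k M₁ M₂ K *
          (EInl k M₁ M₂ I * xOm k (prodMatrix M₁ M₂) (.inl s) * EInl k M₁ M₂ J) *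
            EInr k M₁ M₂ K := by
        rw [hIK.eq]; simp only [mul_assoc]
    _ = _ := by
        rw [(commute_EInr_EInl_mul_xOm_mul hs ht' K).eq, mul_assoc]
        exact congrArg (_ * ·)
          (isIdempotentElem_idemProd (fun b => isIdempotentElem_eOm k _ _) K)

end Product

theorem statement11_general {B₁ B₂ : Type*} [Fintype B₁] [DecidableEq B₁] [Fintype B₂]
    [DecidableEq B₂] (M₁ : CoxeterMatrix B₁) (M₂ : CoxeterMatrix B₂)
    (f₁ : Omega ℤ M₁ →+* Omega ℤ (prodMatrix M₁ M₂))
    (f₂ : Omega ℤ M₂ →+* Omega ℤ (prodMatrix M₁ M₂))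
    (h₁ : Parab1Cond ℤ M₁ M₂ ⇑f₁) (h₂ : Parab2Cond ℤ M₁ M₂ ⇑f₂)
    (I J : Finset B₁) (hIJ : Transversal M₁ I J) (s : B₁) (hs : s ∈ I \ J)
    (K : Finset B₂) :
    f₁ (XOm ℤ M₁ I J s) * f₂ (EOm ℤ M₂ K) =
      XOm ℤ (prodMatrix M₁ M₂) (fjoin I K) (fjoin J K) (Sum.inl s) ∧
    f₂ (EOm ℤ M₂ K) * f₁ (XOm ℤ M₁ I J s) =
      XOm ℤ (prodMatrix M₁ M₂) (fjoin I K) (fjoin J K) (Sum.inl s) := by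
  obtain ⟨t', ht'⟩ := hIJ.2
  have hX : f₁ (XOm ℤ M₁ I J s) =
      EInl ℤ M₁ M₂ I * xOm ℤ (prodMatrix M₁ M₂) (.inl s) * EInl ℤ M₁ M₂ J := by
    rw [XOm, map_mul, map_mul, map_EOm_of_parab1 h₁, map_EOm_of_parab1 h₁, (h₁ s).2]
  rw [hX, map_EOm_of_parab2 h₂, XOm_fjoin hs ht']
  exact ⟨rfl, (commute_EInr_EInl_mul_xOm_mul hs ht' K).eq⟩

/-- for transversal edges `I ⇆ J` in `Q_{W₁}` and `K ⊆ S₂` one has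
`ι₁(X_{IJ}) ι₂(E_K) = X_{I⊔K, J⊔K} = ι₂(E_K) ι₁(X_{IJ})` in `Ω(W,S)`. -/
theorem statement11 {B₁ B₂ : Type*} [Fintype B₁] [DecidableEq B₁] [Fintype B₂]
    [DecidableEq B₂] (M₁ : CoxeterMatrix B₁) (M₂ : CoxeterMatrix B₂)
    {W₁ W₂ : Type*} [Group W₁] [Group W₂] [Finite W₁] [Finite W₂]
    (cs₁ : CoxeterSystem M₁ W₁) (cs₂ : CoxeterSystem M₂ W₂)
    (cs : CoxeterSystem (prodMatrix M₁ M₂) (W₁ × W₂))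
    (f₁ : Omega ℤ M₁ →+* Omega ℤ (prodMatrix M₁ M₂))
    (f₂ : Omega ℤ M₂ →+* Omega ℤ (prodMatrix M₁ M₂))
    (h₁ : Parab1Cond ℤ M₁ M₂ ⇑f₁) (h₂ : Parab2Cond ℤ M₁ M₂ ⇑f₂)
    (I J : Finset B₁) (hIJ : Transversal M₁ I J) (s : B₁) (hs : s ∈ I \ J)
    (K : Finset B₂) :
    f₁ (XOm ℤ M₁ I J s) * f₂ (EOm ℤ M₂ K) =
      XOm ℤ (prodMatrix M₁ M₂) (fjoin I K) (fjoin J K) (Sum.inl s) ∧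
    f₂ (EOm ℤ M₂ K) * f₁ (XOm ℤ M₁ I J s) =
      XOm ℤ (prodMatrix M₁ M₂) (fjoin I K) (fjoin J K) (Sum.inl s) :=
  statement11_general M₁ M₂ f₁ f₂ h₁ h₂ I J hIJ s hs K

end WGraphPaper

end
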